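/- Let X be an archimedean prestreak and a, b, c, d ∈ X with 0 < b < a and 0 < d < c. Then a·d + b·c < a·c + b·d. -/
import Mathlib


/-- A prestreak: a strict order (asymmetric and cotransitive) together with a
commutative additive monoid structure and a commutative multiplicative monoid
structure on the positive part, compatible with the order.  (The intrinsic
topology conditions of the paper are omitted, being vacuous in the classical
set-theoretic setting.) -/
structure Prestreak (X : Type*) where
  lt : X → X → Prop
  add : X → X → X
  zero : X
  mul : X → X → X
  one : X
  lt_asymm : ∀ a b, ¬ (lt a b ∧ lt b a)
  lt_cotrans : ∀ a b x, lt a b → lt a x ∨ lt x b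
  add_comm : ∀ a b, add a b = add b a
  add_assoc : ∀ a b c, add (add a b) c = add a (add b c)
  add_zero : ∀ a, add a zero = a
  zero_lt_one : lt zero one
  mul_pos : ∀ a b, lt zero a → lt zero b → lt zero (mul a b)
  mul_comm : ∀ a b, lt zero a → lt zero b → mul a b = mul b a
  mul_assoc : ∀ a b c, lt zero a → lt zero b → lt zero c →
    mul (mul a b) c = mul a (mul b c)
  mul_one : ∀ a, lt zero a → mul a one = a
  mul_add : ∀ a b c, lt zero a → lt zero b → lt zero c →
    mul (add a b) c = add (mul a c) (mul b c)
  add_lt_add_iff : ∀ a b x, (lt (add a x) (add b x) ↔ lt a b)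
  mul_lt_mul_iff : ∀ a b x, lt zero a → lt zero b → lt zero x →
    (lt (mul a x) (mul b x) ↔ lt a b)

namespace Prestreak

variable {X : Type*}

/-- Multiplication by a natural number: `0·a = 0`, `(n+1)·a = n·a + a`. -/
def nsmul (P : Prestreak X) : ℕ → X → X
  | 0, _ => P.zero
  | n + 1, a => P.add (nsmul P n a) a

/-- The canonical image of a natural number, `n ↦ n·1`. -/
def ofNat (P : Prestreak X) (n : ℕ) : X := P.nsmul n P.one

/-- Comparison `x < q` of an element of a prestreak with a rational number,
using the canonical representation `q = (q.num⁺ − q.num⁻)/q.den`: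
`x < (a−b)/c  :=  c·x + b < a`. -/
def ltQ (P : Prestreak X) (x : X) (q : ℚ) : Prop :=
  P.lt (P.add (P.nsmul q.den x) (P.ofNat ((-q.num).toNat))) (P.ofNat q.num.toNat)

/-- Comparison `q < x` of a rational with an element of a prestreak:
`(a−b)/c < x  :=  a < c·x + b`. -/
def qLt (P : Prestreak X) (q : ℚ) (x : X) : Prop :=
  P.lt (P.ofNat q.num.toNat) (P.add (P.nsmul q.den x) (P.ofNat ((-q.num).toNat)))

/-- The archimedean property for prestreaks. -/
def Archimedean (P : Prestreak X) : Prop :=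
  ∀ a b c d : X, P.lt b d →
    ∃ n : ℕ, P.lt (P.add a (P.nsmul n b)) (P.add c (P.nsmul n d))

/-- Tightness: antisymmetry of `≤` (where `a ≤ b := ¬ b < a`).
A streak is a tight archimedean prestreak. -/
def Tight (P : Prestreak X) : Prop :=
  ∀ a b : X, ¬ P.lt a b → ¬ P.lt b a → a = b

/-- The apartness relation `a # b := a < b ∨ b < a`. -/
def Apart (P : Prestreak X) (a b : X) : Prop := P.lt a b ∨ P.lt b a

/-- A morphism of prestreaks: preserves `<`, `+`, `0`, `1` and products of
positive elements. -/
def IsHom {Y : Type*} (P : Prestreak X) (Q : Prestreak Y) (f : X → Y) : Prop :=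
  (∀ a b, P.lt a b → Q.lt (f a) (f b)) ∧
  (∀ a b, f (P.add a b) = Q.add (f a) (f b)) ∧
  f P.zero = Q.zero ∧ f P.one = Q.one ∧
  (∀ a b, P.lt P.zero a → P.lt P.zero b → f (P.mul a b) = Q.mul (f a) (f b))

/-- A multiplicative structure on a prestreak: a total multiplication which is
commutative, associative, distributes over addition, has unit `1`, restricts to
the given multiplication on positive elements, and satisfies the multiplicity
condition. -/
def IsMultiplicative (P : Prestreak X) (tmul : X → X → X) : Prop :=
  (∀ a b, tmul a b = tmul b a) ∧
  (∀ a b c, tmul (tmul a b) c = tmul a (tmul b c)) ∧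
  (∀ a b c, tmul (P.add a b) c = P.add (tmul a c) (tmul b c)) ∧
  (∀ a, tmul a P.one = a) ∧
  (∀ a b, P.lt P.zero a → P.lt P.zero b → tmul a b = P.mul a b) ∧
  (∀ a b c d, P.lt b a → P.lt d c →
    P.lt (P.add (tmul a d) (tmul b c)) (P.add (tmul a c) (tmul b d)))

variable (P : Prestreak X)

lemma lt_irrefl' (a : X) : ¬ P.lt a a := fun h => P.lt_asymm a a ⟨h, h⟩

lemma asymm' {a b : X} (h : P.lt a b) : ¬ P.lt b a := fun h' => P.lt_asymm a b ⟨h, h'⟩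

lemma lt_trans' {a b c : X} (h1 : P.lt a b) (h2 : P.lt b c) : P.lt a c := by
  rcases P.lt_cotrans a b c h1 with h | h
  · exact h
  · exact absurd h2 (P.asymm' h)

lemma lt_of_lt_of_nlt {a b c : X} (h1 : P.lt a b) (h2 : ¬ P.lt c b) : P.lt a c := by
  rcases P.lt_cotrans a b c h1 with h | h
  · exact h
  · exact absurd h h2

lemma lt_of_nlt_of_lt {a b c : X} (h1 : ¬ P.lt b a) (h2 : P.lt b c) : P.lt a c := by
  rcases P.lt_cotrans b c a h2 with h | h
  · exact absurd h h1
  · exact h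

lemma nlt_trans {a b c : X} (h1 : ¬ P.lt b a) (h2 : ¬ P.lt c b) : ¬ P.lt c a :=
  fun h => h2 (P.lt_of_lt_of_nlt h h1)

lemma zero_add' (a : X) : P.add P.zero a = a := by rw [P.add_comm]; exact P.add_zero a

lemma add_lt_add_right' {a b : X} (x : X) (h : P.lt a b) : P.lt (P.add a x) (P.add b x) :=
  (P.add_lt_add_iff a b x).2 h

lemma add_lt_add_left' {a b : X} (x : X) (h : P.lt a b) : P.lt (P.add x a) (P.add x b) := by
  rw [P.add_comm x a, P.add_comm x b]; exact P.add_lt_add_right' x h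

lemma add_lt_add' {a b c d : X} (h1 : P.lt a b) (h2 : P.lt c d) :
    P.lt (P.add a c) (P.add b d) :=
  P.lt_trans' (P.add_lt_add_right' c h1) (P.add_lt_add_left' b h2)

lemma add_nlt_add_right' {a b : X} (x : X) (h : ¬ P.lt a b) :
    ¬ P.lt (P.add a x) (P.add b x) :=
  fun h' => h ((P.add_lt_add_iff a b x).1 h')

lemma add_nlt_add_left' {a b : X} (x : X) (h : ¬ P.lt a b) :
    ¬ P.lt (P.add x a) (P.add x b) := by
  rw [P.add_comm x a, P.add_comm x b]; exact P.add_nlt_add_right' x h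

lemma add_nlt_add' {a b c d : X} (h1 : ¬ P.lt a b) (h2 : ¬ P.lt c d) :
    ¬ P.lt (P.add a c) (P.add b d) :=
  P.nlt_trans (P.add_nlt_add_left' b h2) (P.add_nlt_add_right' c h1)

lemma add_add_add_comm' (a b c d : X) :
    P.add (P.add a b) (P.add c d) = P.add (P.add a c) (P.add b d) := by
  rw [P.add_assoc, ← P.add_assoc b c d, P.add_comm b c, P.add_assoc c b d, ← P.add_assoc]

lemma nsmul_succ' (n : ℕ) (x : X) : P.nsmul (n+1) x = P.add (P.nsmul n x) x := rfl

lemma nsmul_zero_right (n : ℕ) : P.nsmul n P.zero = P.zero := by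
  induction n with
  | zero => rfl
  | succ n ih => rw [nsmul_succ', ih, P.add_zero]

lemma nsmul_add_dist (n : ℕ) (x y : X) :
    P.nsmul n (P.add x y) = P.add (P.nsmul n x) (P.nsmul n y) := by
  induction n with
  | zero => exact (P.add_zero P.zero).symm
  | succ n ih => rw [nsmul_succ', ih, nsmul_succ', nsmul_succ', P.add_add_add_comm']

lemma nsmul_add_nat (m n : ℕ) (x : X) :
    P.nsmul (m+n) x = P.add (P.nsmul m x) (P.nsmul n x) := by
  induction n with
  | zero => exact (P.add_zero _).symm
  | succ n ih => rw [← Nat.add_assoc, nsmul_succ', ih, nsmul_succ', P.add_assoc]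

lemma nsmul_nsmul (m n : ℕ) (x : X) :
    P.nsmul m (P.nsmul n x) = P.nsmul (m*n) x := by
  induction m with
  | zero => rw [Nat.zero_mul]; rfl
  | succ m ih => rw [nsmul_succ', ih, Nat.succ_mul, nsmul_add_nat]

lemma nsmul_lt_nsmul {x y : X} {n : ℕ} (hn : n ≠ 0) (h : P.lt x y) :
    P.lt (P.nsmul n x) (P.nsmul n y) := by
  induction n with
  | zero => exact absurd rfl hn
  | succ n ih =>
    rcases Nat.eq_zero_or_pos n with h0 | h0
    · subst h0
      rw [nsmul_succ', nsmul_succ']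
      exact P.add_lt_add_left' _ h
    · exact P.add_lt_add' (ih (Nat.pos_iff_ne_zero.1 h0)) h

lemma nsmul_nlt_nsmul {x y : X} (n : ℕ) (h : ¬ P.lt x y) :
    ¬ P.lt (P.nsmul n x) (P.nsmul n y) := by
  induction n with
  | zero => exact P.lt_irrefl' _
  | succ n ih => exact P.add_nlt_add' ih h

lemma nsmul_pos {x : X} {n : ℕ} (hn : n ≠ 0) (h : P.lt P.zero x) :
    P.lt P.zero (P.nsmul n x) := by
  have := P.nsmul_lt_nsmul hn h
  rwa [P.nsmul_zero_right] at this

lemma nsmul_lt_reflect {x y : X} (n : ℕ)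
    (h : P.lt (P.nsmul n x) (P.nsmul n y)) : P.lt x y := by
  induction n with
  | zero => exact absurd h (P.lt_irrefl' _)
  | succ n ih =>
    rw [P.nsmul_succ', P.nsmul_succ'] at h
    rcases P.lt_cotrans _ _ (P.add (P.nsmul n x) y) h with h' | h'
    · rw [P.add_comm (P.nsmul n x) x, P.add_comm (P.nsmul n x) y] at h'
      exact (P.add_lt_add_iff x y _).1 h'
    · exact ih ((P.add_lt_add_iff _ _ y).1 h')

lemma ofNat_pos {n : ℕ} (hn : n ≠ 0) : P.lt P.zero (P.ofNat n) :=
  P.nsmul_pos hn P.zero_lt_one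

lemma ofNat_nonneg (n : ℕ) : ¬ P.lt (P.ofNat n) P.zero := by
  rcases Nat.eq_zero_or_pos n with h0 | h0
  · subst h0; exact P.lt_irrefl' _
  · exact P.asymm' (P.ofNat_pos (Nat.pos_iff_ne_zero.1 h0))

lemma ofNat_add (m n : ℕ) : P.ofNat (m+n) = P.add (P.ofNat m) (P.ofNat n) :=
  P.nsmul_add_nat m n P.one

lemma ofNat_nlt_of_le {m n : ℕ} (h : m ≤ n) : ¬ P.lt (P.ofNat n) (P.ofNat m) := by
  obtain ⟨k, rfl⟩ := Nat.exists_eq_add_of_le h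
  intro hlt
  rw [P.ofNat_add] at hlt
  have h2 : P.lt (P.add (P.ofNat k) (P.ofNat m)) (P.add P.zero (P.ofNat m)) := by
    rw [P.zero_add', P.add_comm]; exact hlt
  exact P.ofNat_nonneg k ((P.add_lt_add_iff _ _ _).1 h2)

lemma ofNat_lt_of_lt {m n : ℕ} (h : m < n) : P.lt (P.ofNat m) (P.ofNat n) := by
  obtain ⟨k, rfl⟩ := Nat.exists_eq_add_of_lt h
  rw [Nat.add_assoc, P.ofNat_add]
  have h2 : P.lt (P.add (P.ofNat m) P.zero) (P.add (P.ofNat m) (P.ofNat (k+1))) :=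
    P.add_lt_add_left' _ (P.ofNat_pos (Nat.succ_ne_zero k))
  rwa [P.add_zero] at h2

lemma ofNat_lt_reflect {m n : ℕ} (h : P.lt (P.ofNat m) (P.ofNat n)) : m < n := by
  by_contra hc
  exact P.ofNat_nlt_of_le (Nat.le_of_not_lt hc) h

lemma nsmul_ofNat (m n : ℕ) : P.nsmul m (P.ofNat n) = P.ofNat (m*n) :=
  P.nsmul_nsmul m n P.one

lemma mul_lt_mul_right' {x y z : X} (hx : P.lt P.zero x) (hy : P.lt P.zero y)
    (hz : P.lt P.zero z) (h : P.lt x y) : P.lt (P.mul x z) (P.mul y z) :=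
  (P.mul_lt_mul_iff x y z hx hy hz).2 h

lemma mul_nlt_mul_right' {x y z : X} (hx : P.lt P.zero x) (hy : P.lt P.zero y)
    (hz : P.lt P.zero z) (h : ¬ P.lt x y) : ¬ P.lt (P.mul x z) (P.mul y z) :=
  fun h' => h ((P.mul_lt_mul_iff x y z hx hy hz).1 h')

lemma mul_lt_mul' {x y u v : X} (hx : P.lt P.zero x) (hu : P.lt P.zero u)
    (hxy : P.lt x y) (huv : P.lt u v) : P.lt (P.mul x u) (P.mul y v) := by
  have hy : P.lt P.zero y := P.lt_trans' hx hxy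
  have hv : P.lt P.zero v := P.lt_trans' hu huv
  have h1 : P.lt (P.mul x u) (P.mul y u) := P.mul_lt_mul_right' hx hy hu hxy
  have h2 : P.lt (P.mul u y) (P.mul v y) := P.mul_lt_mul_right' hu hv hy huv
  rw [P.mul_comm u y hu hy, P.mul_comm v y hv hy] at h2
  exact P.lt_trans' h1 h2

lemma mul_nlt_mul' {x y u v : X} (hx : P.lt P.zero x) (hy : P.lt P.zero y)
    (hu : P.lt P.zero u) (hv : P.lt P.zero v)
    (hxy : ¬ P.lt y x) (huv : ¬ P.lt v u) : ¬ P.lt (P.mul y v) (P.mul x u) := by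
  have h1 : ¬ P.lt (P.mul y v) (P.mul x v) := P.mul_nlt_mul_right' hy hx hv hxy
  have h2 : ¬ P.lt (P.mul v x) (P.mul u x) := P.mul_nlt_mul_right' hv hu hx huv
  rw [P.mul_comm v x hv hx, P.mul_comm u x hu hx] at h2
  exact P.nlt_trans h2 h1

lemma nsmul_mul {x y : X} {n : ℕ} (hn : n ≠ 0) (hx : P.lt P.zero x) (hy : P.lt P.zero y) :
    P.mul (P.nsmul n x) y = P.nsmul n (P.mul x y) := by
  induction n with
  | zero => exact absurd rfl hn
  | succ n ih =>
    rcases Nat.eq_zero_or_pos n with h0 | h0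
    · subst h0
      show P.mul (P.add P.zero x) y = P.add P.zero (P.mul x y)
      rw [P.zero_add', P.zero_add']
    · have hn' : n ≠ 0 := Nat.pos_iff_ne_zero.1 h0
      rw [nsmul_succ', P.mul_add _ _ _ (P.nsmul_pos hn' hx) hx hy, ih hn', nsmul_succ']

lemma ofNat_mul_left {x : X} {n : ℕ} (hn : n ≠ 0) (hx : P.lt P.zero x) :
    P.mul (P.ofNat n) x = P.nsmul n x := by
  show P.mul (P.nsmul n P.one) x = P.nsmul n x
  rw [P.nsmul_mul hn P.zero_lt_one hx, P.mul_comm P.one x P.zero_lt_one hx, P.mul_one x hx]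

lemma ofNat_mul_ofNat {k l : ℕ} (hk : k ≠ 0) (hl : l ≠ 0) :
    P.mul (P.ofNat k) (P.ofNat l) = P.ofNat (k*l) := by
  rw [P.ofNat_mul_left hk (P.ofNat_pos hl), P.nsmul_ofNat]

lemma nsmul_mul_nsmul {x y : X} {t v : ℕ} (ht : t ≠ 0) (hv : v ≠ 0)
    (hx : P.lt P.zero x) (hy : P.lt P.zero y) :
    P.mul (P.nsmul t x) (P.nsmul v y) = P.nsmul (t*v) (P.mul x y) := by
  have hvy : P.lt P.zero (P.nsmul v y) := P.nsmul_pos hv hy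
  rw [P.nsmul_mul ht hx hvy, ← P.nsmul_nsmul]
  congr 1
  rw [P.mul_comm x _ hx hvy, P.nsmul_mul hv hy hx, P.mul_comm y x hy hx]

lemma ofNat_mul_nlt {x y : X} {k l : ℕ} (hx : P.lt P.zero x) (hy : P.lt P.zero y)
    (h1 : ¬ P.lt x (P.ofNat k)) (h2 : ¬ P.lt y (P.ofNat l)) :
    ¬ P.lt (P.mul x y) (P.ofNat (k*l)) := by
  rcases Nat.eq_zero_or_pos k with h0 | h0
  · subst h0; rw [Nat.zero_mul]; exact P.asymm' (P.mul_pos x y hx hy)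
  rcases Nat.eq_zero_or_pos l with h0' | h0'
  · subst h0'; rw [Nat.mul_zero]; exact P.asymm' (P.mul_pos x y hx hy)
  have hk := Nat.pos_iff_ne_zero.1 h0
  have hl := Nat.pos_iff_ne_zero.1 h0'
  rw [← P.ofNat_mul_ofNat hk hl]
  exact P.mul_nlt_mul' (P.ofNat_pos hk) hx (P.ofNat_pos hl) hy h1 h2

lemma exists_ofNat_gt (hA : P.Archimedean) (x : X) : ∃ n, P.lt x (P.ofNat n) := by
  obtain ⟨n, hn⟩ := hA x P.zero P.zero P.one P.zero_lt_one
  refine ⟨n, ?_⟩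
  rwa [P.nsmul_zero_right, P.add_zero, P.zero_add'] at hn

lemma exists_gap (hA : P.Archimedean) {b a : X} (h : P.lt b a) (G : ℕ) :
    ∃ t, P.lt (P.add (P.ofNat G) (P.nsmul t b)) (P.nsmul t a) := by
  obtain ⟨n, hn⟩ := hA (P.ofNat G) b P.zero a h
  refine ⟨n, ?_⟩
  rwa [P.zero_add'] at hn

lemma locate {x : X} (hx : P.lt P.zero x) :
    ∀ N, P.lt x (P.ofNat N) → ∃ k, ¬ P.lt x (P.ofNat k) ∧ P.lt x (P.ofNat (k+1)) := by
  intro N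
  induction N with
  | zero => intro h; exact absurd (P.lt_trans' hx h) (P.lt_irrefl' _)
  | succ N ih =>
    intro h
    by_cases hc : P.lt x (P.ofNat N)
    · exact ih hc
    · exact ⟨N, hc, h⟩

lemma nat_key (α γ s p u r : ℕ) (hα : 1 ≤ α) (hγ : 1 ≤ γ)
    (hp : (4*γ+4) + s ≤ p) (hr : (4*α+4) + u ≤ r)
    (hpub : p < (4*γ+4)*α) (hrub : r < (4*α+4)*γ) :
    (p+1)*(u+1) + (s+1)*(r+1) ≤ p*r + s*u := by
  zify at *
  nlinarith [mul_le_mul (by linarith : (4*(γ:ℤ)+4) ≤ (p:ℤ) - s)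
    (by linarith : (4*(α:ℤ)+4) ≤ (r:ℤ) - u)
    (by positivity) (by linarith)]

lemma abstract_key {A B C D : X} {α γ : ℕ}
    (hα : 1 ≤ α) (hγ : 1 ≤ γ)
    (hBpos : P.lt P.zero B) (hDpos : P.lt P.zero D)
    (hApos : P.lt P.zero A) (hCpos : P.lt P.zero C)
    (hgapb : P.lt (P.add (P.ofNat (4*γ+4)) B) A)
    (hgapd : P.lt (P.add (P.ofNat (4*α+4)) D) C)
    (hAub : P.lt A (P.ofNat ((4*γ+4)*α))) (hCub : P.lt C (P.ofNat ((4*α+4)*γ))) :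
    P.lt (P.add (P.mul A D) (P.mul B C)) (P.add (P.mul A C) (P.mul B D)) := by
  have hHne : (4*γ+4) ≠ 0 := by omega
  have hKne : (4*α+4) ≠ 0 := by omega
  have hBltA : P.lt B A := by
    have h1 : P.lt (P.add P.zero B) (P.add (P.ofNat (4*γ+4)) B) :=
      P.add_lt_add_right' B (P.ofNat_pos hHne)
    rw [P.zero_add'] at h1
    exact P.lt_trans' h1 hgapb
  have hDltC : P.lt D C := by
    have h1 : P.lt (P.add P.zero D) (P.add (P.ofNat (4*α+4)) D) :=
      P.add_lt_add_right' D (P.ofNat_pos hKne)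
    rw [P.zero_add'] at h1
    exact P.lt_trans' h1 hgapd
  obtain ⟨p, hpl, hpu⟩ := P.locate hApos _ hAub
  obtain ⟨s, hsl, hsu⟩ := P.locate hBpos _ (P.lt_trans' hBltA hAub)
  obtain ⟨r, hrl, hru⟩ := P.locate hCpos _ hCub
  obtain ⟨u, hul, huu⟩ := P.locate hDpos _ (P.lt_trans' hDltC hCub)
  -- natural-number relations
  have hps : (4*γ+4) + s ≤ p := by
    have e1 : ¬ P.lt (P.add (P.ofNat (4*γ+4)) B) (P.add (P.ofNat (4*γ+4)) (P.ofNat s)) :=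
      P.add_nlt_add_left' _ hsl
    have e2 : P.lt (P.add (P.ofNat (4*γ+4)) (P.ofNat s)) A := P.lt_of_nlt_of_lt e1 hgapb
    have e3 : P.lt (P.ofNat ((4*γ+4)+s)) (P.ofNat (p+1)) := by
      rw [P.ofNat_add]; exact P.lt_trans' e2 hpu
    have := P.ofNat_lt_reflect e3
    omega
  have hur : (4*α+4) + u ≤ r := by
    have e1 : ¬ P.lt (P.add (P.ofNat (4*α+4)) D) (P.add (P.ofNat (4*α+4)) (P.ofNat u)) :=
      P.add_nlt_add_left' _ hul
    have e2 : P.lt (P.add (P.ofNat (4*α+4)) (P.ofNat u)) C := P.lt_of_nlt_of_lt e1 hgapd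
    have e3 : P.lt (P.ofNat ((4*α+4)+u)) (P.ofNat (r+1)) := by
      rw [P.ofNat_add]; exact P.lt_trans' e2 hru
    have := P.ofNat_lt_reflect e3
    omega
  have hpub : p < (4*γ+4)*α := P.ofNat_lt_reflect (P.lt_of_nlt_of_lt hpl hAub)
  have hrub : r < (4*α+4)*γ := P.ofNat_lt_reflect (P.lt_of_nlt_of_lt hrl hCub)
  -- object-level bounds
  have hAD : P.lt (P.mul A D) (P.ofNat ((p+1)*(u+1))) := by
    rw [← P.ofNat_mul_ofNat (Nat.succ_ne_zero p) (Nat.succ_ne_zero u)]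
    exact P.mul_lt_mul' hApos hDpos hpu huu
  have hBC : P.lt (P.mul B C) (P.ofNat ((s+1)*(r+1))) := by
    rw [← P.ofNat_mul_ofNat (Nat.succ_ne_zero s) (Nat.succ_ne_zero r)]
    exact P.mul_lt_mul' hBpos hCpos hsu hru
  have hAC : ¬ P.lt (P.mul A C) (P.ofNat (p*r)) := P.ofNat_mul_nlt hApos hCpos hpl hrl
  have hBD : ¬ P.lt (P.mul B D) (P.ofNat (s*u)) := P.ofNat_mul_nlt hBpos hDpos hsl hul
  have h1 : P.lt (P.add (P.mul A D) (P.mul B C))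
      (P.ofNat ((p+1)*(u+1) + (s+1)*(r+1))) := by
    rw [P.ofNat_add]; exact P.add_lt_add' hAD hBC
  have h2 : ¬ P.lt (P.ofNat (p*r + s*u)) (P.ofNat ((p+1)*(u+1) + (s+1)*(r+1))) :=
    P.ofNat_nlt_of_le (Prestreak.nat_key α γ s p u r hα hγ hps hur hpub hrub)
  have h3 : P.lt (P.add (P.mul A D) (P.mul B C)) (P.ofNat (p*r + s*u)) :=
    P.lt_of_lt_of_nlt h1 h2
  have h4 : ¬ P.lt (P.add (P.mul A C) (P.mul B D)) (P.ofNat (p*r + s*u)) := by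
    rw [P.ofNat_add]; exact P.add_nlt_add' hAC hBD
  exact P.lt_of_lt_of_nlt h3 h4


end Prestreak

/-- The multiplicity condition holds for positive elements in an archimedean
prestreak: if `0 < b < a` and `0 < d < c` then `a·d + b·c < a·c + b·d`. -/
theorem multiplicity_condition_for_positive_elements {X : Type*}
    (P : Prestreak X) (hA : P.Archimedean) (a b c d : X)
    (h0b : P.lt P.zero b) (hba : P.lt b a)
    (h0d : P.lt P.zero d) (hdc : P.lt d c) :
    P.lt (P.add (P.mul a d) (P.mul b c)) (P.add (P.mul a c) (P.mul b d)) := by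
  classical
  have h0a : P.lt P.zero a := P.lt_trans' h0b hba
  have h0c : P.lt P.zero c := P.lt_trans' h0d hdc
  obtain ⟨p1, hp1⟩ := P.exists_ofNat_gt hA a
  obtain ⟨r1, hr1⟩ := P.exists_ofNat_gt hA c
  have hp1' : P.lt a (P.ofNat (p1+1)) :=
    P.lt_of_lt_of_nlt hp1 (P.ofNat_nlt_of_le (Nat.le_succ p1))
  have hr1' : P.lt c (P.ofNat (r1+1)) :=
    P.lt_of_lt_of_nlt hr1 (P.ofNat_nlt_of_le (Nat.le_succ r1))
  obtain ⟨t0, ht0⟩ := P.exists_gap hA hba 1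
  obtain ⟨v0, hv0⟩ := P.exists_gap hA hdc 1
  have ht0ne : t0 ≠ 0 := by
    rintro rfl
    rw [show P.nsmul 0 b = P.zero from rfl, show P.nsmul 0 a = P.zero from rfl,
      P.add_zero] at ht0
    exact P.ofNat_nonneg 1 ht0
  have hv0ne : v0 ≠ 0 := by
    rintro rfl
    rw [show P.nsmul 0 d = P.zero from rfl, show P.nsmul 0 c = P.zero from rfl,
      P.add_zero] at hv0
    exact P.ofNat_nonneg 1 hv0
  have hα : 1 ≤ t0 * (p1+1) := Nat.one_le_iff_ne_zero.2
    (Nat.mul_ne_zero ht0ne (Nat.succ_ne_zero p1))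
  have hγ : 1 ≤ v0 * (r1+1) := Nat.one_le_iff_ne_zero.2
    (Nat.mul_ne_zero hv0ne (Nat.succ_ne_zero r1))
  have hHne : (4*(v0*(r1+1))+4) ≠ 0 := by omega
  have hKne : (4*(t0*(p1+1))+4) ≠ 0 := by omega
  have htne : (4*(v0*(r1+1))+4) * t0 ≠ 0 := Nat.mul_ne_zero hHne ht0ne
  have hvne : (4*(t0*(p1+1))+4) * v0 ≠ 0 := Nat.mul_ne_zero hKne hv0ne
  -- scaled gaps
  have hgapb : P.lt (P.add (P.ofNat (4*(v0*(r1+1))+4))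
      (P.nsmul ((4*(v0*(r1+1))+4) * t0) b)) (P.nsmul ((4*(v0*(r1+1))+4) * t0) a) := by
    have h := P.nsmul_lt_nsmul (n := 4*(v0*(r1+1))+4) hHne ht0
    rwa [P.nsmul_add_dist, P.nsmul_nsmul, P.nsmul_nsmul, P.nsmul_ofNat, Nat.mul_one] at h
  have hgapd : P.lt (P.add (P.ofNat (4*(t0*(p1+1))+4))
      (P.nsmul ((4*(t0*(p1+1))+4) * v0) d)) (P.nsmul ((4*(t0*(p1+1))+4) * v0) c) := by
    have h := P.nsmul_lt_nsmul (n := 4*(t0*(p1+1))+4) hKne hv0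
    rwa [P.nsmul_add_dist, P.nsmul_nsmul, P.nsmul_nsmul, P.nsmul_ofNat, Nat.mul_one] at h
  -- upper bounds for scaled elements
  have hAub : P.lt (P.nsmul ((4*(v0*(r1+1))+4) * t0) a)
      (P.ofNat ((4*(v0*(r1+1))+4) * (t0*(p1+1)))) := by
    have h := P.nsmul_lt_nsmul (n := (4*(v0*(r1+1))+4) * t0) htne hp1'
    rwa [P.nsmul_ofNat, Nat.mul_assoc] at h
  have hCub : P.lt (P.nsmul ((4*(t0*(p1+1))+4) * v0) c)
      (P.ofNat ((4*(t0*(p1+1))+4) * (v0*(r1+1)))) := by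
    have h := P.nsmul_lt_nsmul (n := (4*(t0*(p1+1))+4) * v0) hvne hr1'
    rwa [P.nsmul_ofNat, Nat.mul_assoc] at h
  have key := P.abstract_key hα hγ
    (P.nsmul_pos htne h0b) (P.nsmul_pos hvne h0d)
    (P.nsmul_pos htne h0a) (P.nsmul_pos hvne h0c)
    hgapb hgapd hAub hCub
  rw [P.nsmul_mul_nsmul htne hvne h0a h0d, P.nsmul_mul_nsmul htne hvne h0b h0c,
    P.nsmul_mul_nsmul htne hvne h0a h0c, P.nsmul_mul_nsmul htne hvne h0b h0d,
    ← P.nsmul_add_dist, ← P.nsmul_add_dist] at key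
  exact P.nsmul_lt_reflect _ key
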